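/- Let h ∈ ℝ[t_1,…,t_p] be a dually Lorentzian polynomial and let w ∈ ℕ^p. Then the w-truncation of h is again a dually Lorentzian polynomial. -/

import Mathlib

open MvPolynomial

section Defs

variable {σ : Type*} [Fintype σ] [DecidableEq σ]

/-- A set `J ⊆ ℕ^σ` of exponent vectors is M-convex. -/
def MConvex (J : Set (σ →₀ ℕ)) : Prop :=
  ∀ q ∈ J, ∀ r ∈ J, ∀ i : σ, q i < r i →
    ∃ j : σ, r j < q j ∧ q + Finsupp.single i 1 - Finsupp.single j 1 ∈ J ∧
      r - Finsupp.single i 1 + Finsupp.single j 1 ∈ J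

/-- The normalization operator `N(Σ aₙ tⁿ) = Σ (aₙ/n!) tⁿ`, where `n! = n₁!⋯n_p!`. -/
noncomputable def normalizeOp (h : MvPolynomial σ ℝ) : MvPolynomial σ ℝ :=
  h.support.sum fun n => monomial n (h.coeff n / n.prod fun _ k => (Nat.factorial k : ℝ))

/-- The (symmetric) Hessian matrix of a polynomial: the constant terms of its second partials. -/
noncomputable def hessianMatrix (g : MvPolynomial σ ℝ) : Matrix σ σ ℝ :=
  fun i j => MvPolynomial.coeff 0 (pderiv i (pderiv j g))

/-- A real symmetric matrix has at most one positive eigenvalue iff its quadratic form is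
positive on no subspace of dimension `≥ 2` (minus the origin). -/
def AtMostOnePosEig (H : Matrix σ σ ℝ) : Prop :=
  ∀ W : Submodule ℝ (σ → ℝ),
    (∀ v ∈ W, v ≠ 0 → 0 < dotProduct v (H.mulVec v)) → Module.finrank ℝ W ≤ 1

/-- Lorentzian polynomial: homogeneous of some degree `d`, nonnegative coefficients, M-convex
support, and every `(d-2)`-fold partial derivative is a quadratic form with at most one
positive eigenvalue. -/
def IsLorentzian (h : MvPolynomial σ ℝ) : Prop :=
  ∃ d : ℕ, h.IsHomogeneous d ∧ (∀ m, 0 ≤ h.coeff m) ∧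
    MConvex (↑h.support : Set (σ →₀ ℕ)) ∧
    ∀ l : List σ, l.length = d - 2 →
      AtMostOnePosEig (hessianMatrix (l.foldr (fun i g => pderiv i g) h))

/-- `t^m · h(t₁⁻¹, …, t_p⁻¹)`, defined when `m` dominates the support of `h`. -/
noncomputable def flipPoly (m : σ →₀ ℕ) (h : MvPolynomial σ ℝ) : MvPolynomial σ ℝ :=
  h.support.sum fun n => monomial (m - n) (h.coeff n)

/-- `h` is dually Lorentzian if `N(t^m h(1/t))` is Lorentzian for some `m` large enough that
`t^m h(1/t)` is a polynomial. -/
def IsDuallyLorentzian (h : MvPolynomial σ ℝ) : Prop :=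
  ∃ m : σ →₀ ℕ, (∀ n ∈ h.support, n ≤ m) ∧ IsLorentzian (normalizeOp (flipPoly m h))

/-- The coefficient of `h` at an integer exponent vector, with the convention that it is `0`
whenever some entry is negative. -/
noncomputable def coeffInt {R : Type*} [CommSemiring R] (h : MvPolynomial σ R) (m : σ → ℤ) : R :=
  if ∀ i, 0 ≤ m i then h.coeff (Finsupp.equivFunOnFinite.symm fun i => (m i).toNat) else 0

/-- Discrete log-concavity: `aₙ² ≥ a_{n+eᵢ-eⱼ} · a_{n-eᵢ+eⱼ}` for all `n, i, j`. -/
def DiscretelyLogConcave {R : Type*} [CommRing R] [LinearOrder R] [IsStrictOrderedRing R] (h : MvPolynomial σ R) : Prop :=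
  ∀ (n : σ →₀ ℕ) (i j : σ),
    coeffInt h (fun k => (n k : ℤ) + (if k = i then 1 else 0) - (if k = j then 1 else 0)) *
      coeffInt h (fun k => (n k : ℤ) - (if k = i then 1 else 0) + (if k = j then 1 else 0)) ≤
      h.coeff n ^ 2

/-- The `w`-truncation of a polynomial: keep exactly the terms with exponent vector `≤ w`
componentwise. -/
noncomputable def truncationPoly {R : Type*} [CommSemiring R] (w : σ →₀ ℕ)
    (h : MvPolynomial σ R) : MvPolynomial σ R :=
  (h.support.filter fun n => n ≤ w).sum fun n => monomial n (h.coeff n)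

end Defs

section Aux

set_option linter.unusedSectionVars false
set_option maxHeartbeats 1000000

variable {σ : Type*} [Fintype σ] [DecidableEq σ]

theorem degree_add' (a b : σ →₀ ℕ) : (a + b).degree = a.degree + b.degree := by
  simp only [Finsupp.degree_eq_weight_one, map_add]

theorem degree_single' (i : σ) : (Finsupp.single i 1 : σ →₀ ℕ).degree = 1 := by
  exact Finsupp.degree_single i 1

theorem coeff_pderiv' (i : σ) (f : MvPolynomial σ ℝ) (n : σ →₀ ℕ) :
    coeff n (pderiv i f) = (n i + 1 : ℝ) * coeff (n + Finsupp.single i 1) f := by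
  induction f using MvPolynomial.induction_on' with
  | monomial s a =>
    rw [pderiv_monomial, coeff_monomial, coeff_monomial]
    by_cases hs : s i = 0
    · have h2 : s ≠ n + Finsupp.single i 1 := by
        intro h; apply absurd hs; rw [h]; simp
      rw [if_neg h2]
      split
      · simp [hs]
      · ring
    · have hiff : s - Finsupp.single i 1 = n ↔ s = n + Finsupp.single i 1 := by
        constructor <;> intro h <;> ext j <;>
          have := DFunLike.congr_fun h j <;>
          simp only [Finsupp.tsub_apply, Finsupp.add_apply, Finsupp.single_apply] at * <;>
          rcases eq_or_ne i j with rfl | hj <;> simp_all <;> omega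
      by_cases h : s - Finsupp.single i 1 = n
      · rw [if_pos h, if_pos (hiff.mp h)]
        have : s i = n i + 1 := by
          have := (hiff.mp h); rw [this]; simp
        rw [this]; push_cast; ring
      · rw [if_neg h, if_neg (fun hc => h (hiff.mpr hc))]; ring
  | add p q hp hq =>
    simp only [map_add, coeff_add, hp, hq, mul_add]

theorem coeff_normalizeOp (h : MvPolynomial σ ℝ) (n : σ →₀ ℕ) :
    coeff n (normalizeOp h) = h.coeff n / n.prod fun _ j => (Nat.factorial j : ℝ) := by
  rw [normalizeOp, coeff_sum]
  simp only [coeff_monomial]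
  by_cases hn : n ∈ h.support
  · rw [Finset.sum_eq_single n]
    · simp
    · intro b _ hb; rw [if_neg hb]
    · intro hc; exact absurd hn hc
  · rw [Finset.sum_eq_zero, eq_comm]
    · simp only [mem_support_iff, not_not] at hn; simp [hn]
    · intro b hb
      rw [if_neg]; rintro rfl; exact hn hb

theorem fact_prod_step (n : σ →₀ ℕ) (i : σ) :
    ((n + Finsupp.single i 1).prod fun _ k => (Nat.factorial k : ℝ))
      = (n i + 1 : ℝ) * n.prod fun _ k => (Nat.factorial k : ℝ) := by
  have key : ∀ m : σ →₀ ℕ, (m.prod fun _ k => (Nat.factorial k : ℝ))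
      = ∏ j : σ, ((m j).factorial : ℝ) := fun m =>
    Finsupp.prod_fintype _ _ (fun _ => by simp)
  rw [key, key,
    Finset.prod_eq_mul_prod_sdiff_singleton_of_mem (Finset.mem_univ i),
    Finset.prod_eq_mul_prod_sdiff_singleton_of_mem (Finset.mem_univ i) (fun j => ((n j).factorial : ℝ))]
  have h1 : ((n + Finsupp.single i 1 : σ →₀ ℕ)) i = n i + 1 := by simp
  have h2 : ∀ j ∈ Finset.univ \ {i}, ((((n + Finsupp.single i 1 : σ →₀ ℕ)) j).factorial : ℝ)
      = ((n j).factorial : ℝ) := by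
    intro j hj
    simp only [Finset.mem_sdiff, Finset.mem_singleton] at hj
    rw [Finsupp.add_apply, Finsupp.single_apply, if_neg (fun h => hj.2 h.symm), add_zero]
  rw [Finset.prod_congr rfl h2, h1, Nat.factorial_succ]
  push_cast; ring

theorem fact_prod_ne_zero (n : σ →₀ ℕ) :
    (n.prod fun _ k => (Nat.factorial k : ℝ)) ≠ 0 := by
  rw [Finsupp.prod]
  exact Finset.prod_ne_zero_iff.mpr fun j _ => Nat.cast_ne_zero.mpr (Nat.factorial_ne_zero _)

theorem pderiv_normalizeOp (i : σ) (g : MvPolynomial σ ℝ) :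
    pderiv i (normalizeOp g) = normalizeOp (g.divMonomial (Finsupp.single i 1)) := by
  ext n
  rw [coeff_pderiv', coeff_normalizeOp, coeff_normalizeOp, coeff_divMonomial,
    fact_prod_step, add_comm (Finsupp.single i 1) n]
  have h1 : (n i + 1 : ℝ) ≠ 0 := by positivity
  rw [← mul_div_assoc, mul_div_mul_left _ _ h1]

theorem atMostOnePosEig_zero : AtMostOnePosEig (0 : Matrix σ σ ℝ) := by
  intro W hW
  have : W = ⊥ := by
    rw [Submodule.eq_bot_iff]
    intro v hv
    by_contra hne
    have := hW v hv hne
    simp [Matrix.mulVec_zero] at this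
  rw [this]
  simp

theorem mconvex_shift {J : Set (σ →₀ ℕ)} (hJ : MConvex J) (i : σ) :
    MConvex {n : σ →₀ ℕ | n + Finsupp.single i 1 ∈ J} := by
  intro q hq r hr a ha
  have ha' : ((q + Finsupp.single i 1 : σ →₀ ℕ)) a < ((r + Finsupp.single i 1 : σ →₀ ℕ)) a := by
    simp only [Finsupp.add_apply]; omega
  obtain ⟨b, hb, hA, hB⟩ := hJ _ hq _ hr a ha'
  simp only [Finsupp.add_apply] at hb
  rcases eq_or_ne b i with rfl | hbi
  · have hrb : r b < q b := by simpa using hb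
    refine ⟨b, hrb, ?_, ?_⟩
    · have e1 : q + Finsupp.single a 1 - Finsupp.single b 1 + Finsupp.single b 1
          = q + Finsupp.single b 1 + Finsupp.single a 1 - Finsupp.single b 1 := by
        ext j
        simp only [Finsupp.add_apply, Finsupp.tsub_apply, Finsupp.single_apply]
        split_ifs <;> subst_vars <;> omega
      simpa [Set.mem_setOf_eq, e1] using hA
    · have e2 : r - Finsupp.single a 1 + Finsupp.single b 1 + Finsupp.single b 1
          = r + Finsupp.single b 1 - Finsupp.single a 1 + Finsupp.single b 1 := by
        have hra : 1 ≤ r a := by omega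
        ext j
        simp only [Finsupp.add_apply, Finsupp.tsub_apply, Finsupp.single_apply]
        split_ifs <;> subst_vars <;> omega
      simpa [Set.mem_setOf_eq, e2] using hB
  · have hrb : r b < q b := by
      simp only [Finsupp.single_apply, if_neg (fun h : i = b => hbi h.symm)] at hb
      omega
    refine ⟨b, hrb, ?_, ?_⟩
    · have e1 : q + Finsupp.single a 1 - Finsupp.single b 1 + Finsupp.single i 1
          = q + Finsupp.single i 1 + Finsupp.single a 1 - Finsupp.single b 1 := by
        ext j
        simp only [Finsupp.add_apply, Finsupp.tsub_apply, Finsupp.single_apply]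
        have hqb : 1 ≤ q b := by omega
        split_ifs <;> subst_vars <;> omega
      simpa [Set.mem_setOf_eq, e1] using hA
    · have e2 : r - Finsupp.single a 1 + Finsupp.single b 1 + Finsupp.single i 1
          = r + Finsupp.single i 1 - Finsupp.single a 1 + Finsupp.single b 1 := by
        have hra : 1 ≤ r a := by omega
        ext j
        simp only [Finsupp.add_apply, Finsupp.tsub_apply, Finsupp.single_apply]
        split_ifs <;> subst_vars <;> omega
      simpa [Set.mem_setOf_eq, e2] using hB

theorem isLorentzian_pderiv (i : σ) (h : MvPolynomial σ ℝ) (hL : IsLorentzian h) :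
    IsLorentzian (pderiv i h) := by
  obtain ⟨d, hd, hnn, hM, hH⟩ := hL
  refine ⟨d - 1, ?_, ?_, ?_, ?_⟩
  · intro n hn
    rw [coeff_pderiv'] at hn
    have h2 : coeff (n + Finsupp.single i 1) h ≠ 0 := by
      intro hc; rw [hc, mul_zero] at hn; exact hn rfl
    have h3 := hd h2
    rw [show (Finsupp.weight 1 : (σ →₀ ℕ) →+ ℕ) = Finsupp.degree from
      (Finsupp.degree_eq_weight_one).symm] at h3 ⊢
    rw [degree_add', degree_single'] at h3
    omega
  · intro n
    rw [coeff_pderiv']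
    exact mul_nonneg (by positivity) (hnn _)
  · have hset : (↑(pderiv i h).support : Set (σ →₀ ℕ))
        = {n : σ →₀ ℕ | n + Finsupp.single i 1 ∈ (↑h.support : Set (σ →₀ ℕ))} := by
      ext n
      simp only [Finset.coe_sort_coe, Set.mem_setOf_eq, Finset.mem_coe, mem_support_iff,
        coeff_pderiv']
      constructor
      · intro hn hc; exact hn (by rw [hc, mul_zero])
      · intro hn hc
        have hne : (n i + 1 : ℝ) ≠ 0 := by positivity
        exact hn ((mul_eq_zero.mp hc).resolve_left hne)
    rw [hset]
    exact mconvex_shift hM i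
  · intro l hl
    by_cases hd3 : 3 ≤ d
    · have hlen : (l ++ [i]).length = d - 2 := by
        simp only [List.length_append, List.length_singleton, hl]; omega
      have := hH (l ++ [i]) hlen
      rwa [List.foldr_append] at this
    · have hl0 : l = [] := List.length_eq_zero_iff.mp (by omega)
      subst hl0
      have hzero : hessianMatrix (pderiv i h) = 0 := by
        ext a b
        show coeff 0 (pderiv a (pderiv b (pderiv i h))) = 0
        rw [coeff_pderiv', coeff_pderiv', coeff_pderiv']
        rw [MvPolynomial.IsHomogeneous.coeff_eq_zero hd, mul_zero, mul_zero, mul_zero]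
        rw [degree_add', degree_add', degree_add', degree_single', degree_single',
          degree_single', map_zero]
        omega
      show AtMostOnePosEig (hessianMatrix (pderiv i h))
      rw [hzero]
      exact atMostOnePosEig_zero

theorem isLorentzian_divMonomial (v : σ →₀ ℕ) :
    ∀ g : MvPolynomial σ ℝ, IsLorentzian (normalizeOp g) →
      IsLorentzian (normalizeOp (g.divMonomial v)) := by
  suffices H : ∀ N (v : σ →₀ ℕ), v.degree = N → ∀ g : MvPolynomial σ ℝ,
      IsLorentzian (normalizeOp g) → IsLorentzian (normalizeOp (g.divMonomial v)) from
    fun g hg => H v.degree v rfl g hg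
  intro N
  induction N using Nat.strong_induction_on with
  | _ N ih =>
  intro v hN g hg
  rcases Nat.eq_zero_or_pos N with rfl | hpos
  · have : v = 0 := (Finsupp.degree_eq_zero_iff v).mp hN
    rwa [this, MvPolynomial.divMonomial_zero]
  · have hv : v ≠ 0 := by
      intro hc; rw [hc, map_zero] at hN; omega
    obtain ⟨a, ha⟩ : ∃ a, v a ≠ 0 := by
      by_contra hc
      push_neg at hc
      exact hv (Finsupp.ext fun j => hc j)
    have hdecomp : v = (v - Finsupp.single a 1) + Finsupp.single a 1 := by
      ext j
      simp only [Finsupp.add_apply, Finsupp.tsub_apply, Finsupp.single_apply]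
      split_ifs <;> subst_vars <;> omega
    have hdeg : (v - Finsupp.single a 1).degree = N - 1 := by
      have := degree_add' (v - Finsupp.single a 1) (Finsupp.single a 1)
      rw [← hdecomp, degree_single', hN] at this
      omega
    rw [hdecomp, MvPolynomial.divMonomial_add, ← pderiv_normalizeOp]
    exact isLorentzian_pderiv a _ (ih (N - 1) (by omega) _ hdeg g hg)

theorem coeff_flipPoly (m : σ →₀ ℕ) (h : MvPolynomial σ ℝ) (hm : ∀ n ∈ h.support, n ≤ m)
    (k : σ →₀ ℕ) :
    coeff k (flipPoly m h) = if k ≤ m then coeff (m - k) h else 0 := by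
  rw [flipPoly, coeff_sum]
  simp only [coeff_monomial]
  by_cases hk : k ≤ m
  · rw [if_pos hk]
    by_cases hmem : m - k ∈ h.support
    · rw [Finset.sum_eq_single (m - k)]
      · rw [if_pos]
        ext j
        simp only [Finsupp.tsub_apply]
        have := hk j
        omega
      · intro b hb hbne
        rw [if_neg]
        intro hc
        apply hbne
        have hbm := hm b hb
        ext j
        have h1 := DFunLike.congr_fun hc j
        have h2 := hbm j
        have h3 := hk j
        simp only [Finsupp.tsub_apply] at h1 ⊢
        omega
      · intro hc; exact absurd hmem hc
    · rw [Finset.sum_eq_zero, eq_comm]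
      · simp only [mem_support_iff, not_not] at hmem; exact hmem
      · intro b hb
        rw [if_neg]
        intro hc
        apply hmem
        have : b = m - k := by
          have hbm := hm b hb
          ext j
          have h1 := DFunLike.congr_fun hc j
          have h2 := hbm j
          have h3 := hk j
          simp only [Finsupp.tsub_apply] at h1 ⊢
          omega
        rwa [← this]
  · rw [if_neg hk, Finset.sum_eq_zero]
    intro b hb
    rw [if_neg]
    intro hc
    apply hk
    intro j
    have h1 := DFunLike.congr_fun hc j
    simp only [Finsupp.tsub_apply] at h1
    omega

theorem coeff_truncationPoly {R : Type*} [CommSemiring R] (w : σ →₀ ℕ) (h : MvPolynomial σ R)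
    (n : σ →₀ ℕ) :
    coeff n (truncationPoly w h) = if n ≤ w then coeff n h else 0 := by
  classical
  rw [truncationPoly, coeff_sum]
  simp only [coeff_monomial]
  by_cases hn : n ∈ h.support.filter fun k => k ≤ w
  · rw [Finset.sum_eq_single n]
    · simp [(Finset.mem_filter.mp hn).2]
    · intro b _ hb; rw [if_neg hb]
    · intro hc; exact absurd hn hc
  · rw [Finset.sum_eq_zero]
    · by_cases hnw : n ≤ w
      · rw [if_pos hnw, eq_comm]
        have : n ∉ h.support := by
          intro hc; exact hn (Finset.mem_filter.mpr ⟨hc, hnw⟩)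
        simpa [mem_support_iff, not_not] using this
      · rw [if_neg hnw]
    · intro b hb
      rw [if_neg]
      rintro rfl
      exact hn hb

theorem support_truncationPoly_le (w : σ →₀ ℕ) (h : MvPolynomial σ ℝ) {m : σ →₀ ℕ}
    (hm : ∀ n ∈ h.support, n ≤ m) :
    ∀ n ∈ (truncationPoly w h).support, n ≤ w ⊓ m := by
  intro n hn
  rw [mem_support_iff, coeff_truncationPoly] at hn
  by_cases hnw : n ≤ w
  · rw [if_pos hnw] at hn
    exact le_inf hnw (hm n (mem_support_iff.mpr hn))
  · rw [if_neg hnw] at hn; exact absurd rfl hn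

theorem flip_trunc (m w : σ →₀ ℕ) (h : MvPolynomial σ ℝ) (hm : ∀ n ∈ h.support, n ≤ m) :
    flipPoly (w ⊓ m) (truncationPoly w h)
      = (flipPoly m h).divMonomial (m - (w ⊓ m)) := by
  have hum : w ⊓ m ≤ m := inf_le_right
  ext k
  rw [coeff_flipPoly _ _ (support_truncationPoly_le w h hm), coeff_divMonomial,
    coeff_flipPoly _ _ hm]
  by_cases hk : k ≤ w ⊓ m
  · rw [if_pos hk, coeff_truncationPoly, if_pos, if_pos]
    · congr 1
      ext j
      have h1 := hk j
      have h2 := hum j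
      simp only [Finsupp.tsub_apply, Finsupp.add_apply, Finsupp.inf_apply] at *
      omega
    · intro j
      have h1 := hk j
      have h2 := hum j
      simp only [Finsupp.tsub_apply, Finsupp.add_apply, Finsupp.inf_apply] at *
      omega
    · intro j
      have h1 := hk j
      have h2 : (w ⊓ m) j ≤ w j := inf_le_left (a := w) (b := m) j
      simp only [Finsupp.tsub_apply, Finsupp.inf_apply] at *
      omega
  · rw [if_neg hk, if_neg, eq_comm]
    intro hc
    apply hk
    intro j
    have h1 := hc j
    have h2 := hum j
    simp only [Finsupp.tsub_apply, Finsupp.add_apply, Finsupp.inf_apply] at *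
    omega

end Aux

/-- The truncation of a dually Lorentzian polynomial is dually Lorentzian. -/
theorem truncation_dually_lorentzian {p : ℕ} (h : MvPolynomial (Fin p) ℝ) (w : Fin p →₀ ℕ)
    (hh : IsDuallyLorentzian h) : IsDuallyLorentzian (truncationPoly w h) := by
  obtain ⟨m, hm, hL⟩ := hh
  refine ⟨w ⊓ m, support_truncationPoly_le w h hm, ?_⟩
  rw [flip_trunc m w h hm]
  exact isLorentzian_divMonomial _ _ hL
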